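/- arXiv:quant-ph/0302174 — 4 statements merged into one kernel-verified Lean document; each statement's English description precedes it below -/
import Mathlib

section
/- Let (A_j)_{j∈J} be Kraus operators of a memoryless quantum channel. If a quantum source (ρ_m)_{m≥1} is stationary and ergodic, then the transformed family (E^{⊗m}(ρ_m))_{m≥1} is ergodic. -/
open Matrix Finset Filter Topology
open scoped ComplexOrder

noncomputable section

/-- `Mat d m` is the algebra of operators on the `m`-fold tensor power of `ℂ^d`,
realized as matrices indexed by words `Fin m → Fin d`. -/
abbrev Mat (d m : ℕ) : Type := Matrix (Fin m → Fin d) (Fin m → Fin d) ℂ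

/-- Kronecker (tensor) product `A ⊗ B` of `A : Mat d m` and `B : Mat d i`. -/
def tens {d m i : ℕ} (A : Mat d m) (B : Mat d i) : Mat d (m + i) :=
  Matrix.of fun x y =>
    A (fun k => x (Fin.castAdd i k)) (fun k => y (Fin.castAdd i k)) *
    B (fun k => x (Fin.natAdd m k)) (fun k => y (Fin.natAdd m k))

/-- A quantum source: each `ρ m` (for `m ≥ 1`) is positive semidefinite with trace 1. -/
def IsQSource (d : ℕ) (ρ : ∀ m, Mat d m) : Prop :=
  ∀ m, 1 ≤ m → (ρ m).PosSemidef ∧ (ρ m).trace = 1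

/-- Consistency: `tr(ρ_m a) = tr(ρ_{m+i} (a ⊗ I^{⊗i}))`. -/
def QConsistent (d : ℕ) (ρ : ∀ m, Mat d m) : Prop :=
  ∀ m i, 1 ≤ m → 1 ≤ i → ∀ a : Mat d m,
    (ρ m * a).trace = (ρ (m + i) * tens a (1 : Mat d i)).trace

/-- Stationarity: `tr(ρ_m a) = tr(ρ_{i+m} (I^{⊗i} ⊗ a))`. -/
def QStationary (d : ℕ) (ρ : ∀ m, Mat d m) : Prop :=
  ∀ m i, 1 ≤ m → 1 ≤ i → ∀ a : Mat d m,
    (ρ m * a).trace = (ρ (i + m) * tens (1 : Mat d i) a).trace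

/-- Ergodicity: Cesàro averages of `tr(ρ_{m+i} (a ⊗ I^{⊗(i-m)} ⊗ b))` converge to
`tr(ρ_m a)·tr(ρ_m b)`. -/
def QErgodic (d : ℕ) (ρ : ∀ m, Mat d m) : Prop :=
  ∀ m, 1 ≤ m → ∀ a b : Mat d m,
    Tendsto (fun n : ℕ =>
        (n : ℂ)⁻¹ * ∑ i ∈ Finset.Icc m n,
          (ρ (m + (i - m) + m) * tens (tens a (1 : Mat d (i - m))) b).trace)
      atTop (nhds ((ρ m * a).trace * (ρ m * b).trace))

/-- Weak mixing. -/
def QWeakMixing (d : ℕ) (ρ : ∀ m, Mat d m) : Prop :=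
  ∀ m, 1 ≤ m → ∀ a b : Mat d m,
    Tendsto (fun n : ℕ =>
        (n : ℝ)⁻¹ * ∑ i ∈ Finset.Icc m n,
          ‖(ρ (m + (i - m) + m) * tens (tens a (1 : Mat d (i - m))) b).trace
            - (ρ m * a).trace * (ρ m * b).trace‖)
      atTop (nhds 0)

/-- Strong mixing. -/
def QStrongMixing (d : ℕ) (ρ : ∀ m, Mat d m) : Prop :=
  ∀ m, 1 ≤ m → ∀ a b : Mat d m,
    Tendsto (fun i : ℕ =>
        (ρ (m + (i - m) + m) * tens (tens a (1 : Mat d (i - m))) b).trace)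
      atTop (nhds ((ρ m * a).trace * (ρ m * b).trace))

/-- The `m`-fold elementary tensor `A_{j 1} ⊗ ⋯ ⊗ A_{j m}` of Kraus operators. -/
def krausPow {d : ℕ} {J : Type} [Fintype J] (A : J → Matrix (Fin d) (Fin d) ℂ)
    {m : ℕ} (j : Fin m → J) : Mat d m :=
  Matrix.of fun x y => ∏ k, A (j k) (x k) (y k)

/-- The induced map `E^{⊗m}` of a memoryless channel with Kraus operators `A`. -/
def channelPow {d : ℕ} {J : Type} [Fintype J] (A : J → Matrix (Fin d) (Fin d) ℂ)
    (m : ℕ) (σ : Mat d m) : Mat d m :=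
  ∑ j : Fin m → J, krausPow A j * σ * (krausPow A j)ᴴ

/-- A classical source on alphabet `Fin d`: each `p m` (for `m ≥ 1`) is a
probability distribution on words of length `m`. -/
def IsCSource (d : ℕ) (p : ∀ m, (Fin m → Fin d) → ℝ) : Prop :=
  ∀ m, 1 ≤ m → (∀ x, 0 ≤ p m x) ∧ ∑ x, p m x = 1

def CConsistent (d : ℕ) (p : ∀ m, (Fin m → Fin d) → ℝ) : Prop :=
  ∀ m i, 1 ≤ m → 1 ≤ i → ∀ x : Fin m → Fin d,
    p m x = ∑ y : Fin i → Fin d, p (m + i) (Fin.append x y)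

def CStationary (d : ℕ) (p : ∀ m, (Fin m → Fin d) → ℝ) : Prop :=
  ∀ m i, 1 ≤ m → 1 ≤ i → ∀ x : Fin m → Fin d,
    p m x = ∑ y : Fin i → Fin d, p (i + m) (Fin.append y x)

def CErgodic (d : ℕ) (p : ∀ m, (Fin m → Fin d) → ℝ) : Prop :=
  ∀ m, 1 ≤ m → ∀ x y : Fin m → Fin d,
    Tendsto (fun n : ℕ =>
        (n : ℝ)⁻¹ * ∑ i ∈ Finset.Icc m n,
          ∑ z : Fin (i - m) → Fin d, p (m + (i - m) + m) (Fin.append (Fin.append x z) y))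
      atTop (nhds (p m x * p m y))

def CWeakMixing (d : ℕ) (p : ∀ m, (Fin m → Fin d) → ℝ) : Prop :=
  ∀ m, 1 ≤ m → ∀ x y : Fin m → Fin d,
    Tendsto (fun n : ℕ =>
        (n : ℝ)⁻¹ * ∑ i ∈ Finset.Icc m n,
          |(∑ z : Fin (i - m) → Fin d, p (m + (i - m) + m) (Fin.append (Fin.append x z) y))
            - p m x * p m y|)
      atTop (nhds 0)

def CStrongMixing (d : ℕ) (p : ∀ m, (Fin m → Fin d) → ℝ) : Prop :=
  ∀ m, 1 ≤ m → ∀ x y : Fin m → Fin d,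
    Tendsto (fun i : ℕ =>
        ∑ z : Fin (i - m) → Fin d, p (m + (i - m) + m) (Fin.append (Fin.append x z) y))
      atTop (nhds (p m x * p m y))

/-- The classically correlated state `∑_x p(x) · ψ_{x 1}ψ_{x 1}† ⊗ ⋯ ⊗ ψ_{x m}ψ_{x m}†`. -/
def clsState {d : ℕ} (ψ : Fin d → Fin d → ℂ) {m : ℕ} (pm : (Fin m → Fin d) → ℝ) : Mat d m :=
  ∑ x : Fin m → Fin d, (pm x : ℂ) •
    Matrix.of (fun u v => ∏ k, ψ (x k) (u k) * star (ψ (x k) (v k)))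

/-- The probability `⟨u_{x 1} ⊗ ⋯ ⊗ u_{x m}, ρ (u_{x 1} ⊗ ⋯ ⊗ u_{x m})⟩` of
measurement outcome `x` in the product basis built from `u`. -/
def measProb {d m : ℕ} (ρ : Mat d m) (u : Fin d → Fin d → ℂ) (x : Fin m → Fin d) : ℝ :=
  (∑ v : Fin m → Fin d, ∑ w : Fin m → Fin d,
    star (∏ k, u (x k) (v k)) * ρ v w * ∏ k, u (x k) (w k)).re

/-- Von Neumann entropy (base-2) of a Hermitian matrix, via its eigenvalues;
junk value `0` for non-Hermitian input.  The convention `0·log₂ 0 = 0` holds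
automatically since `Real.logb 2 0 = 0`. -/
def vnEntropy {n : Type} [Fintype n] [DecidableEq n] (ρ : Matrix n n ℂ) : ℝ :=
  if h : ρ.IsHermitian then -∑ k, h.eigenvalues k * Real.logb 2 (h.eigenvalues k) else 0


/-!
The channel has a Heisenberg-picture dual `X ↦ ∑ⱼ Kⱼᴴ X Kⱼ` (over the tensor-power Kraus
operators `Kⱼ`) with `tr (E(σ) X) = tr (σ E*(X))`. Because the channel is memoryless the dual
is multiplicative on tensor products, and because `∑ Aⱼᴴ Aⱼ = I` it is unital. Hence
`tr (E(ρ) (a ⊗ I ⊗ b)) = tr (ρ (E* a ⊗ I ⊗ E* b))`, and ergodicity of `ρ` applied to the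
observables `E* a`, `E* b` is ergodicity of `E(ρ)`.
-/

section PiKronecker

variable {ι n R : Type*} [Fintype ι] [CommSemiring R]

def piKronecker (M : ι → Matrix n n R) : Matrix (ι → n) (ι → n) R :=
  of fun x y => ∏ k, M k (x k) (y k)

lemma piKronecker_mul [DecidableEq ι] [Fintype n] (M N : ι → Matrix n n R) :
    piKronecker M * piKronecker N = piKronecker fun k => M k * N k := by
  ext x y
  simp only [piKronecker, mul_apply, of_apply, ← Finset.prod_mul_distrib]
  rw [Finset.prod_univ_sum, Fintype.piFinset_univ]

lemma sum_piKronecker [DecidableEq ι] {J : Type*} [Fintype J] (M : ι → J → Matrix n n R) :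
    ∑ j : ι → J, piKronecker (fun k => M k (j k)) = piKronecker fun k => ∑ j, M k j := by
  ext x y
  simp only [piKronecker, Matrix.sum_apply, of_apply]
  rw [Finset.prod_univ_sum, Fintype.piFinset_univ]

lemma piKronecker_one [DecidableEq n] : piKronecker (fun _ : ι => (1 : Matrix n n R)) = 1 := by
  ext x y
  simp only [piKronecker, of_apply, one_apply, Finset.prod_boole, Finset.mem_univ, true_imp_iff,
    funext_iff]

lemma conjTranspose_piKronecker [StarRing R] (M : ι → Matrix n n R) :
    (piKronecker M)ᴴ = piKronecker fun k => (M k)ᴴ := by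
  ext x y
  simp [piKronecker, conjTranspose_apply, star_prod]

end PiKronecker

section Tensor

open scoped Kronecker

variable {d m i : ℕ}

lemma tens_eq_submatrix_kronecker (A : Mat d m) (B : Mat d i) :
    tens A B = (A ⊗ₖ B).submatrix (Fin.appendEquiv m i).symm (Fin.appendEquiv m i).symm :=
  rfl

lemma tens_mul (A C : Mat d m) (B D : Mat d i) :
    tens A B * tens C D = tens (A * C) (B * D) := by
  rw [tens_eq_submatrix_kronecker, tens_eq_submatrix_kronecker, submatrix_mul_equiv,
    ← mul_kronecker_mul, tens_eq_submatrix_kronecker]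

lemma conjTranspose_tens (A : Mat d m) (B : Mat d i) : (tens A B)ᴴ = tens Aᴴ Bᴴ := by
  rw [tens_eq_submatrix_kronecker, conjTranspose_submatrix, conjTranspose_kronecker,
    tens_eq_submatrix_kronecker]

lemma tens_sum_sum {ι κ : Type*} (s : Finset ι) (t : Finset κ) (f : ι → Mat d m)
    (g : κ → Mat d i) :
    tens (∑ x ∈ s, f x) (∑ y ∈ t, g y) = ∑ x ∈ s, ∑ y ∈ t, tens (f x) (g y) := by
  ext u v
  simp only [tens, of_apply, Matrix.sum_apply, Finset.sum_mul_sum]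

end Tensor

section Channel

variable {d : ℕ} {J : Type} [Fintype J] (A : J → Matrix (Fin d) (Fin d) ℂ)

lemma krausPow_eq_piKronecker {m : ℕ} (j : Fin m → J) :
    krausPow A j = piKronecker fun k => A (j k) :=
  rfl

lemma krausPow_append {m i : ℕ} (j₁ : Fin m → J) (j₂ : Fin i → J) :
    krausPow A (Fin.append j₁ j₂) = tens (krausPow A j₁) (krausPow A j₂) := by
  ext x y
  simp [krausPow, tens, Fin.prod_univ_add]

lemma sum_conjTranspose_krausPow_mul_krausPow (hA : ∑ j, (A j)ᴴ * A j = 1) (m : ℕ) :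
    ∑ j : Fin m → J, (krausPow A j)ᴴ * krausPow A j = 1 := by
  simp only [krausPow_eq_piKronecker, conjTranspose_piKronecker, piKronecker_mul]
  rw [sum_piKronecker fun _ j => (A j)ᴴ * A j, hA, piKronecker_one]

def dualChannelPow (m : ℕ) (X : Mat d m) : Mat d m :=
  ∑ j : Fin m → J, (krausPow A j)ᴴ * X * krausPow A j

lemma trace_channelPow_mul (m : ℕ) (σ X : Mat d m) :
    (channelPow A m σ * X).trace = (σ * dualChannelPow A m X).trace := by
  simp only [channelPow, dualChannelPow, Finset.sum_mul, Finset.mul_sum, trace_sum]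
  refine Finset.sum_congr rfl fun j _ => ?_
  rw [Matrix.mul_assoc, Matrix.mul_assoc, trace_mul_comm, Matrix.mul_assoc, Matrix.mul_assoc]

lemma dualChannelPow_tens {m i : ℕ} (X : Mat d m) (Y : Mat d i) :
    dualChannelPow A (m + i) (tens X Y) = tens (dualChannelPow A m X) (dualChannelPow A i Y) := by
  rw [dualChannelPow, dualChannelPow, dualChannelPow, tens_sum_sum,
    ← (Fin.appendEquiv m i).sum_comp, Fintype.sum_prod_type]
  simp only [Fin.appendEquiv, Equiv.coe_fn_mk, krausPow_append, conjTranspose_tens, tens_mul]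

lemma dualChannelPow_one (hA : ∑ j, (A j)ᴴ * A j = 1) (m : ℕ) :
    dualChannelPow A m 1 = 1 := by
  simpa only [dualChannelPow, Matrix.mul_one] using sum_conjTranspose_krausPow_mul_krausPow A hA m

end Channel

lemma QErgodic.of_trace_mul_eq {d : ℕ} {ρ σ : ∀ m, Mat d m} (Φ : ∀ m, Mat d m → Mat d m)
    (hdual : ∀ m X, (σ m * X).trace = (ρ m * Φ m X).trace)
    (htens : ∀ m i (X : Mat d m) (Y : Mat d i), Φ (m + i) (tens X Y) = tens (Φ m X) (Φ i Y))
    (hone : ∀ m, Φ m 1 = 1) (herg : QErgodic d ρ) : QErgodic d σ := by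
  intro m hm a b
  simpa only [hdual, htens, hone] using herg m hm (Φ m a) (Φ m b)

theorem channel_preserves_ergodicity_general
    (d : ℕ) (J : Type) [Fintype J]
    (A : J → Matrix (Fin d) (Fin d) ℂ) (hA : ∑ j, (A j)ᴴ * A j = 1)
    (ρ : ∀ m, Mat d m)
    (herg : QErgodic d ρ) :
    QErgodic d (fun m => channelPow A m (ρ m)) :=
  herg.of_trace_mul_eq (dualChannelPow A) (fun m => trace_channelPow_mul A m (ρ m))
    (fun _ _ => dualChannelPow_tens A) (dualChannelPow_one A hA)

/-- a memoryless channel maps a stationary ergodic quantum source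
to an ergodic one. -/
theorem channel_preserves_ergodicity
    (d : ℕ) (hd : 2 ≤ d) (J : Type) [Fintype J]
    (A : J → Matrix (Fin d) (Fin d) ℂ) (hA : ∑ j, (A j)ᴴ * A j = 1)
    (ρ : ∀ m, Mat d m) (hρ : IsQSource d ρ) (hstat : QStationary d ρ)
    (herg : QErgodic d ρ) :
    QErgodic d (fun m => channelPow A m (ρ m)) :=
  channel_preserves_ergodicity_general d J A hA ρ herg
end
end

section
/- Let ψ_1,…,ψ_d ∈ ℂ^d be linearly independent unit vectors and let p = (p_m)_{m≥1} be a consistent, stationary, and ergodic classical source on the alphabet Fin d. Then the classically correlated quantum source (ρ^{cls}_m)_{m≥1} is ergodic. -/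
open Matrix Finset Filter Topology
open scoped ComplexOrder

noncomputable section

/-! Pairing `ρ^cls` with `a ⊗ I^{⊗ i} ⊗ b` gives `∑_{x,z,y} p(x z y) ⟨ψ_x, a ψ_x⟩ ⟨ψ_y, b ψ_y⟩`,
where `ψ_x` is the product vector `ψ_{x 1} ⊗ ⋯ ⊗ ψ_{x m}`: the middle factor contributes
`⟨ψ_z, ψ_z⟩ = 1` because the `ψ_j` are unit vectors. Hence the quantum Cesàro averages are
fixed finite linear combinations of the classical ones, and converge by classical ergodicity. -/

lemma Fin.sum_univ_append {α M : Type*} [Fintype α] [AddCommMonoid M] {m i : ℕ}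
    (g : (Fin (m + i) → α) → M) :
    ∑ w, g w = ∑ x : Fin m → α, ∑ z : Fin i → α, g (Fin.append x z) := by
  rw [← (Fin.appendEquiv m i).sum_comp, Fintype.sum_prod_type]
  rfl

section ProductVectors

variable {d : ℕ}

def prodVec (ψ : Fin d → Fin d → ℂ) {m : ℕ} (x : Fin m → Fin d) : (Fin m → Fin d) → ℂ :=
  fun u => ∏ k, ψ (x k) (u k)

def tensVec {m i : ℕ} (v : (Fin m → Fin d) → ℂ) (w : (Fin i → Fin d) → ℂ) :
    (Fin (m + i) → Fin d) → ℂ :=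
  fun u => v (fun k => u (Fin.castAdd i k)) * w (fun k => u (Fin.natAdd m k))

lemma prodVec_append (ψ : Fin d → Fin d → ℂ) {m i : ℕ} (x : Fin m → Fin d) (z : Fin i → Fin d) :
    prodVec ψ (Fin.append x z) = tensVec (prodVec ψ x) (prodVec ψ z) := by
  funext u
  simp [prodVec, tensVec, Fin.prod_univ_add]

lemma clsState_eq_sum_vecMulVec (ψ : Fin d → Fin d → ℂ) {m : ℕ} (pm : (Fin m → Fin d) → ℝ) :
    clsState ψ pm = ∑ x, (pm x : ℂ) • vecMulVec (prodVec ψ x) (star (prodVec ψ x)) := by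
  unfold clsState
  congr! with x
  ext u v
  simp [vecMulVec_apply, prodVec, Finset.prod_mul_distrib]

lemma trace_vecMulVec_mul {n R : Type*} [Fintype n] [CommSemiring R] (v w : n → R)
    (a : Matrix n n R) : (vecMulVec v w * a).trace = w ⬝ᵥ (a *ᵥ v) := by
  rw [vecMulVec_mul, trace_vecMulVec, dotProduct_comm, dotProduct_mulVec]

lemma dotProduct_tens_mulVec_tensVec {m i : ℕ} (a : Mat d m) (b : Mat d i)
    (v v' : (Fin m → Fin d) → ℂ) (w w' : (Fin i → Fin d) → ℂ) :
    tensVec v w ⬝ᵥ (tens a b *ᵥ tensVec v' w') = (v ⬝ᵥ (a *ᵥ v')) * (w ⬝ᵥ (b *ᵥ w')) := by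
  simp only [dotProduct, mulVec, Fin.sum_univ_append, tensVec, tens, of_apply,
    Fin.append_left, Fin.append_right]
  rw [Finset.sum_mul_sum]
  refine Finset.sum_congr rfl fun x _ => Finset.sum_congr rfl fun z _ => ?_
  rw [mul_mul_mul_comm, Finset.sum_mul_sum]
  congr 1
  refine Finset.sum_congr rfl fun x' _ => Finset.sum_congr rfl fun z' _ => ?_
  ring

lemma star_tensVec {m i : ℕ} (v : (Fin m → Fin d) → ℂ) (w : (Fin i → Fin d) → ℂ) :
    star (tensVec v w) = tensVec (star v) (star w) := by
  funext u
  simp [tensVec]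

lemma star_prodVec_dotProduct_self (ψ : Fin d → Fin d → ℂ)
    (hunit : ∀ j, ∑ k, star (ψ j k) * ψ j k = 1) {m : ℕ} (x : Fin m → Fin d) :
    star (prodVec ψ x) ⬝ᵥ prodVec ψ x = 1 := by
  simp only [dotProduct, prodVec, Pi.star_apply, star_prod, ← Finset.prod_mul_distrib]
  rw [← Fintype.prod_sum (fun k c => star (ψ (x k) c) * ψ (x k) c)]
  exact Finset.prod_eq_one fun k _ => hunit (x k)

def prodExpect (ψ : Fin d → Fin d → ℂ) {m : ℕ} (a : Mat d m) (x : Fin m → Fin d) : ℂ :=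
  star (prodVec ψ x) ⬝ᵥ (a *ᵥ prodVec ψ x)

lemma prodExpect_tens_append (ψ : Fin d → Fin d → ℂ) {m i : ℕ} (a : Mat d m) (b : Mat d i)
    (x : Fin m → Fin d) (z : Fin i → Fin d) :
    prodExpect ψ (tens a b) (Fin.append x z) = prodExpect ψ a x * prodExpect ψ b z := by
  rw [prodExpect, prodVec_append, star_tensVec, dotProduct_tens_mulVec_tensVec]
  rfl

lemma prodExpect_one (ψ : Fin d → Fin d → ℂ) (hunit : ∀ j, ∑ k, star (ψ j k) * ψ j k = 1)
    {m : ℕ} (x : Fin m → Fin d) : prodExpect ψ (1 : Mat d m) x = 1 := by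
  rw [prodExpect, one_mulVec, star_prodVec_dotProduct_self ψ hunit]

lemma trace_clsState_mul (ψ : Fin d → Fin d → ℂ) {m : ℕ} (pm : (Fin m → Fin d) → ℝ)
    (a : Mat d m) :
    (clsState ψ pm * a).trace = ∑ x, (pm x : ℂ) * prodExpect ψ a x := by
  simp [clsState_eq_sum_vecMulVec, Finset.sum_mul, trace_sum, trace_vecMulVec_mul,
    prodExpect]

lemma trace_clsState_mul_tens_one_tens (ψ : Fin d → Fin d → ℂ)
    (hunit : ∀ j, ∑ k, star (ψ j k) * ψ j k = 1) {m n i : ℕ}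
    (q : (Fin (m + i + n) → Fin d) → ℝ) (a : Mat d m) (b : Mat d n) :
    (clsState ψ q * tens (tens a (1 : Mat d i)) b).trace =
      ∑ x, ∑ y, ((∑ z, q (Fin.append (Fin.append x z) y) : ℝ) : ℂ) *
        (prodExpect ψ a x * prodExpect ψ b y) := by
  simp only [trace_clsState_mul, Fin.sum_univ_append, prodExpect_tens_append,
    prodExpect_one ψ hunit, mul_one, Complex.ofReal_sum, Finset.sum_mul]
  exact Finset.sum_congr rfl fun x _ => Finset.sum_comm

end ProductVectors

theorem cls_source_ergodic_general
    (d : ℕ) (ψ : Fin d → Fin d → ℂ)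
    (hunit : ∀ i, ∑ k, star (ψ i k) * ψ i k = 1)
    (p : ∀ m, (Fin m → Fin d) → ℝ) (he : CErgodic d p) :
    QErgodic d (fun m => clsState ψ (p m)) := by
  intro m hm a b
  have hlim : (clsState ψ (p m) * a).trace * (clsState ψ (p m) * b).trace =
      ∑ x, ∑ y, ((p m x * p m y : ℝ) : ℂ) * (prodExpect ψ a x * prodExpect ψ b y) := by
    simp only [trace_clsState_mul, Finset.sum_mul_sum, Complex.ofReal_mul]
    exact Finset.sum_congr rfl fun x _ => Finset.sum_congr rfl fun y _ => by ring
  have havg : ∀ n : ℕ, (n : ℂ)⁻¹ * ∑ i ∈ Finset.Icc m n,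
      (clsState ψ (p (m + (i - m) + m)) * tens (tens a (1 : Mat d (i - m))) b).trace =
      ∑ x, ∑ y, (((n : ℝ)⁻¹ * ∑ i ∈ Finset.Icc m n, ∑ z : Fin (i - m) → Fin d,
          p (m + (i - m) + m) (Fin.append (Fin.append x z) y) : ℝ) : ℂ) *
        (prodExpect ψ a x * prodExpect ψ b y) := by
    intro n
    simp only [trace_clsState_mul_tens_one_tens ψ hunit, Complex.ofReal_mul, Complex.ofReal_sum,
      Complex.ofReal_inv, Complex.ofReal_natCast, Finset.mul_sum, Finset.sum_mul]
    rw [Finset.sum_comm]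
    refine Finset.sum_congr rfl fun x _ => ?_
    rw [Finset.sum_comm]
    refine Finset.sum_congr rfl fun y _ => Finset.sum_congr rfl fun i _ =>
      Finset.sum_congr rfl fun z _ => by ring
  simp only [havg, hlim]
  refine tendsto_finsetSum _ fun x _ => tendsto_finsetSum _ fun y _ => ?_
  exact ((Complex.continuous_ofReal.tendsto _).comp (he m hm x y)).mul_const _

/-- a classically correlated quantum source built from an ergodic
classical source is ergodic. -/
theorem cls_source_ergodic
    (d : ℕ) (hd : 2 ≤ d) (ψ : Fin d → Fin d → ℂ)
    (hind : LinearIndependent ℂ ψ)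
    (hunit : ∀ i, ∑ k, star (ψ i k) * ψ i k = 1)
    (p : ∀ m, (Fin m → Fin d) → ℝ) (hp : IsCSource d p)
    (hc : CConsistent d p) (hs : CStationary d p) (he : CErgodic d p) :
    QErgodic d (fun m => clsState ψ (p m)) :=
  cls_source_ergodic_general d ψ hunit p he
end
end

section
/- Let (ρ_m)_{m≥1} be a consistent, stationary, and ergodic quantum source and let (u_1,…,u_d) be an orthonormal basis of ℂ^d. For each m ≥ 1 and each word x : Fin m → Fin d define p_m(x) := ⟨u_{x(1)} ⊗ ⋯ ⊗ u_{x(m)}, ρ_m (u_{x(1)} ⊗ ⋯ ⊗ u_{x(m)})⟩. Then each p_m is a probability distribution on words of length m, and (p_m)_{m≥1} is a consistent, stationary, and ergodic classical source on the alphabet Fin d. -/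
open Matrix Finset Filter Topology
open scoped ComplexOrder

noncomputable section

/-!
Measuring in the product basis `u_x = u_{x 1} ⊗ ⋯ ⊗ u_{x m}` gives `p_m(x) = tr(ρ_m P_x)` with
`P_x = |u_x⟩⟨u_x|`, which is nonnegative because `ρ_m` is positive semidefinite. Completeness of
the basis, `∑_x P_x = 1`, together with `P_x ⊗ P_y = P_{x·y}` rewrites `P_x ⊗ I^{⊗i}`,
`I^{⊗i} ⊗ P_x` and `P_x ⊗ I^{⊗j} ⊗ P_y` as sums of projectors onto longer words. Applied to
projectors, normalisation, consistency, stationarity and ergodicity of `(ρ_m)` therefore become,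
after taking real parts, the corresponding classical identities for `(p_m)`.
-/

lemma tens_sum_left {d m i : ℕ} {ι : Type*} (s : Finset ι) (A : ι → Mat d m) (B : Mat d i) :
    tens (∑ j ∈ s, A j) B = ∑ j ∈ s, tens (A j) B := by
  ext v w
  simp [tens, Matrix.sum_apply, Finset.sum_mul]

lemma tens_sum_right {d m i : ℕ} {ι : Type*} (A : Mat d m) (s : Finset ι) (B : ι → Mat d i) :
    tens A (∑ j ∈ s, B j) = ∑ j ∈ s, tens A (B j) := by
  ext v w
  simp [tens, Matrix.sum_apply, Finset.mul_sum]

lemma sum_mul_star_eq_ite_of_orthonormal {d : ℕ} {u : Fin d → Fin d → ℂ}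
    (hu : ∀ i j, ∑ k, star (u i k) * u j k = if i = j then (1 : ℂ) else 0) (a b : Fin d) :
    ∑ j, u j a * star (u j b) = if a = b then 1 else 0 := by
  have hrows : of u * (of u)ᴴ = 1 := by
    ext i j
    simpa [mul_apply, one_apply, mul_comm, eq_comm] using hu j i
  simpa [mul_apply, one_apply, mul_comm, eq_comm] using
    congrArg (fun M => M b a) (mul_eq_one_comm.mp hrows)

namespace ProductBasis

variable {d : ℕ} (u : Fin d → Fin d → ℂ)

def vec {m : ℕ} (x : Fin m → Fin d) : (Fin m → Fin d) → ℂ :=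
  fun v => ∏ k, u (x k) (v k)

def proj {m : ℕ} (x : Fin m → Fin d) : Mat d m :=
  vecMulVec (vec u x) (star (vec u x))

lemma trace_mul_proj {m : ℕ} (ρ : Mat d m) (x : Fin m → Fin d) :
    (ρ * proj u x).trace = star (vec u x) ⬝ᵥ (ρ *ᵥ vec u x) := by
  rw [proj, mul_vecMulVec, trace_vecMulVec, dotProduct_comm]

lemma measProb_eq_re_trace {m : ℕ} (ρ : Mat d m) (x : Fin m → Fin d) :
    measProb ρ u x = (ρ * proj u x).trace.re := by
  simp only [measProb, trace_mul_proj, dotProduct, mulVec, Pi.star_apply, Finset.mul_sum, vec,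
    mul_assoc]

lemma trace_mul_proj_nonneg {m : ℕ} {ρ : Mat d m} (hρ : ρ.PosSemidef) (x : Fin m → Fin d) :
    0 ≤ (ρ * proj u x).trace := by
  rw [trace_mul_proj]
  exact hρ.dotProduct_mulVec_nonneg _

lemma ofReal_measProb {m : ℕ} {ρ : Mat d m} (hρ : ρ.PosSemidef) (x : Fin m → Fin d) :
    (measProb ρ u x : ℂ) = (ρ * proj u x).trace := by
  rw [measProb_eq_re_trace]
  exact (Complex.eq_re_of_ofReal_le (trace_mul_proj_nonneg u hρ x)).symm

lemma re_trace_mul_sum_proj {m : ℕ} {ι : Type*} [Fintype ι] (σ : Mat d m)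
    (f : ι → Fin m → Fin d) :
    (σ * ∑ z, proj u (f z)).trace.re = ∑ z, measProb σ u (f z) := by
  simp only [Finset.mul_sum, trace_sum, Complex.re_sum, measProb_eq_re_trace]

lemma tens_proj {m i : ℕ} (x : Fin m → Fin d) (y : Fin i → Fin d) :
    tens (proj u x) (proj u y) = proj u (Fin.append x y) := by
  ext v w
  simp only [tens, proj, vec, of_apply, vecMulVec_apply, Pi.star_apply, star_prod, star_mul',
    Fin.prod_univ_add, Fin.append_left, Fin.append_right]
  ring

variable {u}
variable (hu : ∀ i j, ∑ k, star (u i k) * u j k = if i = j then (1 : ℂ) else 0)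
include hu

lemma sum_proj_eq_one (m : ℕ) : ∑ x : Fin m → Fin d, proj u x = 1 := by
  ext v w
  simp only [Matrix.sum_apply, proj, vec, vecMulVec_apply, Pi.star_apply, star_prod,
    ← Finset.prod_mul_distrib]
  rw [← Fintype.prod_sum fun k j => u j (v k) * star (u j (w k))]
  simp only [sum_mul_star_eq_ite_of_orthonormal hu, Finset.prod_boole, one_apply, funext_iff]
  simp

lemma tens_proj_one {m i : ℕ} (x : Fin m → Fin d) :
    tens (proj u x) (1 : Mat d i) = ∑ y : Fin i → Fin d, proj u (Fin.append x y) := by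
  simp only [← sum_proj_eq_one hu i, tens_sum_right, tens_proj]

lemma tens_one_proj {m i : ℕ} (x : Fin m → Fin d) :
    tens (1 : Mat d i) (proj u x) = ∑ y : Fin i → Fin d, proj u (Fin.append y x) := by
  simp only [← sum_proj_eq_one hu i, tens_sum_left, tens_proj]

lemma tens_tens_proj_one_proj {m j : ℕ} (x y : Fin m → Fin d) :
    tens (tens (proj u x) (1 : Mat d j)) (proj u y)
      = ∑ z : Fin j → Fin d, proj u (Fin.append (Fin.append x z) y) := by
  simp only [tens_proj_one hu, tens_sum_left, tens_proj]

end ProductBasis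

open ProductBasis

section

variable {d : ℕ} {ρ : ∀ m, Mat d m} {u : Fin d → Fin d → ℂ}
variable (hu : ∀ i j, ∑ k, star (u i k) * u j k = if i = j then (1 : ℂ) else 0)
include hu

lemma isCSource_measProb (hρ : IsQSource d ρ) :
    IsCSource d (fun m x => measProb (ρ m) u x) := by
  intro m hm
  obtain ⟨hpsd, htr⟩ := hρ m hm
  refine ⟨fun x => ?_, ?_⟩
  · dsimp only
    rw [measProb_eq_re_trace]
    exact (Complex.nonneg_iff.mp (trace_mul_proj_nonneg u hpsd x)).1
  · have : ∑ x, (measProb (ρ m) u x : ℂ) = 1 := by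
      simp only [ofReal_measProb u hpsd, ← trace_sum, ← Finset.mul_sum, sum_proj_eq_one hu,
        mul_one, htr]
    exact_mod_cast this

lemma cConsistent_measProb (hc : QConsistent d ρ) :
    CConsistent d (fun m x => measProb (ρ m) u x) := by
  intro m i hm hi x
  dsimp only
  rw [measProb_eq_re_trace, hc m i hm hi, tens_proj_one hu, re_trace_mul_sum_proj]

lemma cStationary_measProb (hs : QStationary d ρ) :
    CStationary d (fun m x => measProb (ρ m) u x) := by
  intro m i hm hi x
  dsimp only
  rw [measProb_eq_re_trace, hs m i hm hi, tens_one_proj hu, re_trace_mul_sum_proj]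

lemma cErgodic_measProb (hρ : IsQSource d ρ) (he : QErgodic d ρ) :
    CErgodic d (fun m x => measProb (ρ m) u x) := by
  intro m hm x y
  have hre := (Complex.continuous_re.tendsto _).comp (he m hm (proj u x) (proj u y))
  rw [← ofReal_measProb u (hρ m hm).1, ← ofReal_measProb u (hρ m hm).1, ← Complex.ofReal_mul,
    Complex.ofReal_re] at hre
  refine hre.congr fun n => ?_
  rw [Function.comp_apply, ← Complex.ofReal_natCast, ← Complex.ofReal_inv, Complex.re_ofReal_mul,
    Complex.re_sum]
  simp only [tens_tens_proj_one_proj hu, re_trace_mul_sum_proj]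

end

theorem restriction_to_classical_subsystem_general
    (d : ℕ) (ρ : ∀ m, Mat d m)
    (hρ : IsQSource d ρ) (hc : QConsistent d ρ) (hs : QStationary d ρ)
    (he : QErgodic d ρ)
    (u : Fin d → Fin d → ℂ)
    (hu : ∀ i j, ∑ k, star (u i k) * u j k = if i = j then (1 : ℂ) else 0) :
    IsCSource d (fun m x => measProb (ρ m) u x) ∧
      CConsistent d (fun m x => measProb (ρ m) u x) ∧
      CStationary d (fun m x => measProb (ρ m) u x) ∧
      CErgodic d (fun m x => measProb (ρ m) u x) :=
  ⟨isCSource_measProb hu hρ, cConsistent_measProb hu hc, cStationary_measProb hu hs,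
    cErgodic_measProb hu hρ he⟩

/-- restricting a consistent stationary ergodic quantum source to
the classical subsystem of a product orthonormal basis gives a consistent
stationary ergodic classical source. -/
theorem restriction_to_classical_subsystem
    (d : ℕ) (hd : 2 ≤ d) (ρ : ∀ m, Mat d m)
    (hρ : IsQSource d ρ) (hc : QConsistent d ρ) (hs : QStationary d ρ)
    (he : QErgodic d ρ)
    (u : Fin d → Fin d → ℂ)
    (hu : ∀ i j, ∑ k, star (u i k) * u j k = if i = j then (1 : ℂ) else 0) :
    IsCSource d (fun m x => measProb (ρ m) u x) ∧
      CConsistent d (fun m x => measProb (ρ m) u x) ∧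
      CStationary d (fun m x => measProb (ρ m) u x) ∧
      CErgodic d (fun m x => measProb (ρ m) u x) :=
  restriction_to_classical_subsystem_general d ρ hρ hc hs he u hu
end
end

section
/- Let p = (p_m)_{m≥1} be a consistent classical source on the alphabet Fin d, let (e_1,…,e_d) be the standard orthonormal basis of ℂ^d, and let D_m := ∑_{x : Fin m → Fin d} p_m(x)·(e_{x(1)}e_{x(1)}† ⊗ ⋯ ⊗ e_{x(m)}e_{x(m)}†) be the associated diagonal density matrices. Then (D_m)_{m≥1} is weakly mixing if and only if p is weakly mixing, and (D_m)_{m≥1} is strongly mixing if and only if p is strongly mixing. -/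
/-!
A diagonal state `D = diag(q)` only sees the diagonals of the observables it is tested against:
`tr(D_{2m+j} (a ⊗ I ⊗ b)) = ∑_{x,y} a_xx b_yy ∑_z p(x z y)` and
`tr(D_m a) tr(D_m b) = ∑_{x,y} a_xx b_yy p(x) p(y)`.
So every quantum deviation is a fixed finite linear combination of the classical deviations, which
transfers convergence (plain or in Cesàro mean of absolute values) from the classical to the quantum
side; taking `a`, `b` to be the matrix units at `(x, x)` and `(y, y)` singles out each classical
deviation, which gives the converse.
-/

open Matrix Finset Filter Topology
open scoped ComplexOrder

noncomputable section

theorem tendsto_cesaro_of_le_sum {ι : Type*} [Fintype ι] (s : ℕ → Finset ℕ) {u : ℕ → ℝ}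
    {v : ι → ℕ → ℝ} {c : ι → ℝ} (hu : ∀ i, 0 ≤ u i)
    (huv : ∀ i, u i ≤ ∑ k, c k * v k i)
    (hv : ∀ k, Tendsto (fun n : ℕ => (n : ℝ)⁻¹ * ∑ i ∈ s n, v k i) atTop (𝓝 0)) :
    Tendsto (fun n : ℕ => (n : ℝ)⁻¹ * ∑ i ∈ s n, u i) atTop (𝓝 0) := by
  have hbound : Tendsto (fun n : ℕ => ∑ k, c k * ((n : ℝ)⁻¹ * ∑ i ∈ s n, v k i)) atTop (𝓝 0) := by
    simpa using tendsto_finsetSum _ fun k _ => (hv k).const_mul (c k)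
  refine squeeze_zero (fun n => mul_nonneg (by positivity) (Finset.sum_nonneg fun i _ => hu i))
    (fun n => ?_) hbound
  calc (n : ℝ)⁻¹ * ∑ i ∈ s n, u i
      ≤ (n : ℝ)⁻¹ * ∑ i ∈ s n, ∑ k, c k * v k i := by gcongr with i; exact huv i
    _ = ∑ k, c k * ((n : ℝ)⁻¹ * ∑ i ∈ s n, v k i) := by
      simp only [Finset.mul_sum]
      rw [Finset.sum_comm]
      exact Finset.sum_congr rfl fun k _ => Finset.sum_congr rfl fun i _ => by ring

namespace Matrix

theorem trace_diagonal_mul {n R : Type*} [Fintype n] [DecidableEq n] [NonUnitalNonAssocSemiring R]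
    (v : n → R) (M : Matrix n n R) : (diagonal v * M).trace = ∑ u, v u * M u u := by
  simp [trace, diagonal_mul]

end Matrix

section DiagonalSource

variable {d : ℕ}

theorem clsState_stdBasis {m : ℕ} (pm : (Fin m → Fin d) → ℝ) :
    clsState (fun i k => if k = i then (1 : ℂ) else 0) pm = diagonal fun u => (pm u : ℂ) := by
  ext u v
  have entry : ∀ x : Fin m → Fin d,
      (∏ k, (if u k = x k then (1 : ℂ) else 0) * star (if v k = x k then (1 : ℂ) else 0))
        = if u = x ∧ v = x then 1 else 0 := by
    intro x
    simp only [apply_ite star, star_one, star_zero, ite_zero_mul_ite_zero, mul_one,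
      Finset.prod_boole]
    simp [funext_iff, forall_and]
  simp only [clsState, Matrix.sum_apply, Matrix.smul_apply, of_apply, smul_eq_mul, entry,
    diagonal_apply]
  by_cases huv : u = v
  · subst huv
    simp
  · rw [if_neg huv]
    exact Finset.sum_eq_zero fun x _ => by
      rw [if_neg (by rintro ⟨rfl, rfl⟩; exact huv rfl), mul_zero]

theorem tens_apply_append {m i : ℕ} (A : Mat d m) (B : Mat d i) (x x' : Fin m → Fin d)
    (y y' : Fin i → Fin d) :
    tens A B (Fin.append x y) (Fin.append x' y') = A x x' * B y y' := by
  simp [tens]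

def gapMarginal {m j : ℕ} (q : (Fin (m + j + m) → Fin d) → ℝ) (x y : Fin m → Fin d) : ℝ :=
  ∑ z : Fin j → Fin d, q (Fin.append (Fin.append x z) y)

def diagPairing {m : ℕ} (a b : Mat d m) (F : (Fin m → Fin d) → (Fin m → Fin d) → ℝ) : ℂ :=
  ∑ x, ∑ y, a x x * b y y * F x y

theorem trace_diagonal_mul_tens_one_tens {m j : ℕ} (q : (Fin (m + j + m) → Fin d) → ℝ)
    (a b : Mat d m) :
    (diagonal (fun w => (q w : ℂ)) * tens (tens a (1 : Mat d j)) b).trace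
      = diagPairing a b (gapMarginal q) := by
  rw [trace_diagonal_mul, ← (Fin.appendEquiv (m + j) m).sum_comp, Fintype.sum_prod_type,
    ← (Fin.appendEquiv m j).sum_comp, Fintype.sum_prod_type]
  simp only [Fin.appendEquiv, Equiv.coe_fn_mk, tens_apply_append, one_apply_eq, mul_one,
    diagPairing, gapMarginal, Complex.ofReal_sum, Finset.mul_sum]
  refine Finset.sum_congr rfl fun x _ => ?_
  rw [Finset.sum_comm]
  exact Finset.sum_congr rfl fun y _ => Finset.sum_congr rfl fun z _ => mul_comm _ _

theorem trace_diagonal_mul_mul_trace_diagonal_mul {m : ℕ} (pm : (Fin m → Fin d) → ℝ)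
    (a b : Mat d m) :
    (diagonal (fun u => (pm u : ℂ)) * a).trace * (diagonal (fun u => (pm u : ℂ)) * b).trace
      = diagPairing a b fun x y => pm x * pm y := by
  simp only [trace_diagonal_mul, Finset.sum_mul_sum, diagPairing, Complex.ofReal_mul]
  exact Finset.sum_congr rfl fun x _ => Finset.sum_congr rfl fun y _ => by ring

theorem diagPairing_single {m : ℕ} (x y : Fin m → Fin d)
    (F : (Fin m → Fin d) → (Fin m → Fin d) → ℝ) :
    diagPairing (single x x 1) (single y y 1) F = F x y := by
  simp [diagPairing, single_apply, ite_mul]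

theorem diagPairing_sub {m : ℕ} (a b : Mat d m) (F G : (Fin m → Fin d) → (Fin m → Fin d) → ℝ) :
    diagPairing a b F - diagPairing a b G = diagPairing a b (F - G) := by
  simp only [diagPairing, ← Finset.sum_sub_distrib, Pi.sub_apply, Complex.ofReal_sub, mul_sub]

theorem norm_diagPairing_le {m : ℕ} (a b : Mat d m)
    (F : (Fin m → Fin d) → (Fin m → Fin d) → ℝ) :
    ‖diagPairing a b F‖ ≤ ∑ xy : (Fin m → Fin d) × (Fin m → Fin d),
      ‖a xy.1 xy.1 * b xy.2 xy.2‖ * |F xy.1 xy.2| := by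
  rw [diagPairing, ← Fintype.sum_prod_type']
  refine (norm_sum_le _ _).trans_eq (Finset.sum_congr rfl fun xy _ => ?_)
  rw [norm_mul, Complex.norm_real, Real.norm_eq_abs]

theorem tendsto_diagPairing {α : Type*} {l : Filter α} {m : ℕ} (a b : Mat d m)
    {F : α → (Fin m → Fin d) → (Fin m → Fin d) → ℝ}
    {G : (Fin m → Fin d) → (Fin m → Fin d) → ℝ}
    (h : ∀ x y, Tendsto (fun t => F t x y) l (𝓝 (G x y))) :
    Tendsto (fun t => diagPairing a b (F t)) l (𝓝 (diagPairing a b G)) :=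
  tendsto_finsetSum _ fun x _ => tendsto_finsetSum _ fun y _ =>
    (Complex.continuous_ofReal.tendsto _ |>.comp (h x y)).const_mul _

end DiagonalSource

theorem diagonal_source_mixing_iff_general
    (d : ℕ)
    (p : ∀ m, (Fin m → Fin d) → ℝ) :
    (QWeakMixing d (fun m => clsState (fun i k => if k = i then (1 : ℂ) else 0) (p m))
      ↔ CWeakMixing d p) ∧
    (QStrongMixing d (fun m => clsState (fun i k => if k = i then (1 : ℂ) else 0) (p m))
      ↔ CStrongMixing d p) := by
  simp only [QWeakMixing, QStrongMixing, clsState_stdBasis, trace_diagonal_mul_tens_one_tens,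
    trace_diagonal_mul_mul_trace_diagonal_mul, diagPairing_sub]
  refine ⟨⟨fun hQ m hm x y => ?_, fun hC m hm a b => ?_⟩,
    ⟨fun hQ m hm x y => ?_, fun hC m hm a b => ?_⟩⟩
  · have h := hQ m hm (single x x 1) (single y y 1)
    simp only [diagPairing_single, Pi.sub_apply, Complex.norm_real, Real.norm_eq_abs] at h
    exact h
  · exact tendsto_cesaro_of_le_sum _ (fun _ => norm_nonneg _)
      (fun _ => norm_diagPairing_le a b _) fun xy => hC m hm xy.1 xy.2
  · have h := hQ m hm (single x x 1) (single y y 1)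
    simp only [diagPairing_single, Filter.tendsto_ofReal_iff] at h
    exact h
  · exact tendsto_diagPairing a b fun x y => hC m hm x y

/-- for the diagonal density matrices built from a consistent
classical source `p` on the standard basis, weak (resp. strong) mixing of the
quantum family is equivalent to weak (resp. strong) mixing of `p`. -/
theorem diagonal_source_mixing_iff
    (d : ℕ) (hd : 2 ≤ d)
    (p : ∀ m, (Fin m → Fin d) → ℝ) (hp : IsCSource d p) (hc : CConsistent d p) :
    (QWeakMixing d (fun m => clsState (fun i k => if k = i then (1 : ℂ) else 0) (p m))
      ↔ CWeakMixing d p) ∧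
    (QStrongMixing d (fun m => clsState (fun i k => if k = i then (1 : ℂ) else 0) (p m))
      ↔ CStrongMixing d p) :=
  diagonal_source_mixing_iff_general d p
end
end
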